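/- arXiv:2001.01149 — 3 statements merged into one kernel-verified Lean document; each statement's English description precedes it below -/
import Mathlib

section
/- There exists an absolute constant C > 0 such that the following holds. Let m ≥ 2, let K_{m,m} be the complete bipartite graph with parts A and B of size m, and let H be a spanning subgraph of K_{m,m} whose maximum degree is at most D, where D ≤ m/2. Then the number of perfect matchings of the graph K_{m,m} ∖ H (the bipartite graph on A ∪ B whose edges are those of K_{m,m} not in H) is at most exp(C·D·(log m)/m) · m! · exp(−|E(H)|/m), where |E(H)| is the number of edges of H. -/
/-!
Brégman's theorem, by Schrijver's induction: if the rows `a` of a bipartite graph have degrees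
`r a`, its number `N` of perfect matchings satisfies `log N ≤ ∑ a, log (r a)! / r a`. For each
row `i`, convexity of `x log x` splits `N log N` over the fibres `{f | f i = j}`, and the
induction hypothesis bounds each fibre. Averaging over `i` and double counting closes the
induction, because every matching meets the neighbourhood of `a` in exactly `r a - 1` rows
other than `a`.

In `K_{m,m} ∖ H` the row degrees are `m - d` with `d ≤ m / 2`, and Stirling's upper bound gives
`log (m - d)! / (m - d) ≤ log m! / m - d / m + O(d log m / m²)`. Summed over the rows, this is
`log m! - |E(H)| / m + O(D log m / m)`.
-/

open Finset Real
open scoped Nat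

section Matchings

variable {α : Type*} [Fintype α] [DecidableEq α] {A B : Finset α} {G : α → Finset α}
  {f : α → α} {a i j : α}

/-- Injections `f` of `A` with `f a ∈ G a`, extended by the identity off `A` so that they form a
finset of functions `α → α`. -/
def matchings (A : Finset α) (G : α → Finset α) : Finset (α → α) :=
  {f | (∀ a ∈ A, f a ∈ G a) ∧ (∀ a ∈ A, ∀ b ∈ A, f a = f b → a = b) ∧ ∀ a ∉ A, f a = a}

lemma mem_matchings : f ∈ matchings A G ↔
    (∀ a ∈ A, f a ∈ G a) ∧ (∀ a ∈ A, ∀ b ∈ A, f a = f b → a = b) ∧ ∀ a ∉ A, f a = a := by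
  simp [matchings]

lemma card_matchings_empty_le_one (G : α → Finset α) : #(matchings ∅ G) ≤ 1 :=
  card_le_one.2 fun f hf g hg ↦ funext fun a ↦ by
    rw [(mem_matchings.1 hf).2.2 a (notMem_empty a), (mem_matchings.1 hg).2.2 a (notMem_empty a)]

lemma card_matchings_eq_sum_card_fiberwise (hi : i ∈ A) :
    #(matchings A G) = ∑ j ∈ G i, #{f ∈ matchings A G | f i = j} :=
  card_eq_sum_card_fiberwise fun _ hf ↦ (mem_matchings.1 hf).1 i hi

lemma card_matchings_filter_apply_eq (hi : i ∈ A) (hj : j ∈ G i) :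
    #{f ∈ matchings A G | f i = j} = #(matchings (A.erase i) fun a ↦ (G a).erase j) := by
  refine card_nbij' (Function.update · i i) (Function.update · i j) ?_ ?_ ?_ ?_ <;>
    intro f hf <;>
    simp only [coe_filter, Set.mem_ofPred_eq, mem_matchings, mem_coe, mem_erase] at hf ⊢
  · obtain ⟨⟨hG, hinj, hid⟩, rfl⟩ := hf
    grind [Function.update_apply]
  · obtain ⟨hG, hinj, hid⟩ := hf
    grind [Function.update_apply]
  · grind [Function.update_apply]
  · grind [Function.update_apply]

lemma image_eq_of_mem_matchings (hB : ∀ a ∈ A, G a ⊆ B) (hAB : #B = #A)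
    (hf : f ∈ matchings A G) : A.image f = B := by
  obtain ⟨hG, hinj, -⟩ := mem_matchings.1 hf
  refine eq_of_subset_of_card_le (image_subset_iff.2 fun a ha ↦ hB a ha (hG a ha)) ?_
  rw [card_image_of_injOn fun a ha b hb ↦ hinj a ha b hb, hAB]

lemma card_filter_erase_apply_mem (hB : ∀ a ∈ A, G a ⊆ B) (hAB : #B = #A)
    (hf : f ∈ matchings A G) (ha : a ∈ A) :
    #{i ∈ A.erase a | f i ∈ G a} = #(G a) - 1 := by
  obtain ⟨hG, hinj, -⟩ := mem_matchings.1 hf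
  have himage : {i ∈ A | f i ∈ G a}.image f = G a := by
    rw [← filter_image (p := (· ∈ G a)), image_eq_of_mem_matchings hB hAB hf,
      filter_mem_eq_inter, inter_eq_right.2 (hB a ha)]
  rw [filter_erase, card_erase_of_mem (mem_filter.2 ⟨ha, hG a ha⟩),
    ← card_image_of_injOn fun x hx y hy ↦ hinj x (mem_filter.1 hx).1 y (mem_filter.1 hy).1,
    himage]

end Matchings

lemma mul_log_sum_le_sum_mul_log {ι : Type*} (s : Finset ι) {t : ι → ℝ} (ht : ∀ i ∈ s, 0 ≤ t i) :
    (∑ i ∈ s, t i) * log (∑ i ∈ s, t i) ≤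
      (∑ i ∈ s, t i) * log #s + ∑ i ∈ s, t i * log (t i) := by
  rcases s.eq_empty_or_nonempty with rfl | hs
  · simp
  have hK : (0 : ℝ) < #s := by exact_mod_cast hs.card_pos
  have hjensen := convexOn_mul_log.map_sum_le (t := s) (w := fun _ ↦ (#s : ℝ)⁻¹) (p := t)
    (fun _ _ ↦ by positivity) (by simp [hK.ne']) ht
  simp only [smul_eq_mul, ← mul_sum, mul_assoc, mul_le_mul_iff_right₀ (inv_pos.2 hK)] at hjensen
  rcases (sum_nonneg ht).eq_or_lt with hS | hS
  · simpa [← hS] using hjensen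
  · rwa [← div_eq_inv_mul, log_div hS.ne' hK.ne', mul_sub, sub_le_iff_le_add'] at hjensen

/-- `log` of Brégman's factor `(r!)^(1/r)`; the junk value at `r = 0` is `0`. -/
noncomputable def logFactorialRoot (r : ℕ) : ℝ := log r ! / r

lemma logFactorialRoot_nonneg (r : ℕ) : 0 ≤ logFactorialRoot r :=
  div_nonneg (log_natCast_nonneg _) r.cast_nonneg

lemma natCast_mul_logFactorialRoot (r : ℕ) : r * logFactorialRoot r = log r ! := by
  rcases eq_or_ne r 0 with rfl | hr
  · simp
  · rw [logFactorialRoot, mul_div_cancel₀ _ (by exact_mod_cast hr)]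

lemma log_add_mul_logFactorialRoot_pred (r : ℕ) :
    log r + (r - 1 : ℕ) * logFactorialRoot (r - 1) = r * logFactorialRoot r := by
  rcases eq_or_ne r 0 with rfl | hr
  · simp
  rw [natCast_mul_logFactorialRoot, natCast_mul_logFactorialRoot,
    ← log_mul (by exact_mod_cast hr) (by positivity), ← Nat.cast_mul, Nat.mul_factorial_pred hr]

section Bregman

variable {α : Type*} [Fintype α] [DecidableEq α] {A B : Finset α} {G : α → Finset α}
  {f : α → α} {a i : α}

lemma log_card_add_sum_logFactorialRoot_card_erase (hB : ∀ a ∈ A, G a ⊆ B) (hAB : #B = #A)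
    (hf : f ∈ matchings A G) (ha : a ∈ A) :
    log #(G a) + ∑ i ∈ A.erase a, logFactorialRoot #((G a).erase (f i)) =
      #A * logFactorialRoot #(G a) := by
  set r := #(G a)
  have hr : 1 ≤ r := card_pos.2 ⟨f a, (mem_matchings.1 hf).1 a ha⟩
  have hsplit : ∀ i ∈ A.erase a, logFactorialRoot #((G a).erase (f i)) = logFactorialRoot r +
      if f i ∈ G a then logFactorialRoot (r - 1) - logFactorialRoot r else 0 := by
    intro i _
    split_ifs with h
    · rw [card_erase_of_mem h]; ring
    · rw [erase_eq_of_notMem h]; ring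
  rw [sum_congr rfl hsplit, sum_add_distrib, sum_const, ← sum_filter, sum_const,
    card_filter_erase_apply_mem hB hAB hf ha, card_erase_of_mem ha, nsmul_eq_mul, nsmul_eq_mul,
    Nat.cast_pred (card_pos.2 ⟨a, ha⟩)]
  linear_combination
    log_add_mul_logFactorialRoot_pred r - logFactorialRoot r * Nat.cast_pred (R := ℝ) hr

lemma sum_card_fiberwise_mul_eq_sum_matchings (hi : i ∈ A) (g : α → ℝ) :
    ∑ j ∈ G i, (#{f ∈ matchings A G | f i = j} : ℝ) * g j = ∑ f ∈ matchings A G, g (f i) := by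
  simp only [← nsmul_eq_mul, ← sum_const]
  exact sum_fiberwise_of_maps_to' (fun f hf ↦ (mem_matchings.1 hf).1 i hi) g

lemma card_mul_mul_log_card_matchings_le_of_fiberwise (hB : ∀ a ∈ A, G a ⊆ B) (hAB : #B = #A)
    (hfiber : ∀ i ∈ A, ∀ j ∈ G i, log #{f ∈ matchings A G | f i = j} ≤
      ∑ a ∈ A.erase i, logFactorialRoot #((G a).erase j)) :
    #A * (#(matchings A G) * log #(matchings A G)) ≤
      #A * (#(matchings A G) * ∑ a ∈ A, logFactorialRoot #(G a)) := by
  set M := matchings A G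
  set N : α → α → ℕ := fun i j ↦ #{f ∈ M | f i = j}
  calc (#A : ℝ) * (#M * log #M) = ∑ i ∈ A, #M * log #M := by rw [sum_const, nsmul_eq_mul]
    _ ≤ ∑ i ∈ A, (#M * log #(G i) + ∑ j ∈ G i, (N i j : ℝ) * log (N i j)) := by
        refine sum_le_sum fun i hi ↦ ?_
        have hM : (#M : ℝ) = ∑ j ∈ G i, (N i j : ℝ) := by
          exact_mod_cast card_matchings_eq_sum_card_fiberwise hi
        rw [hM]
        exact mul_log_sum_le_sum_mul_log _ fun _ _ ↦ (N _ _).cast_nonneg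
    _ ≤ ∑ i ∈ A, (#M * log #(G i) +
          ∑ j ∈ G i, (N i j : ℝ) * ∑ a ∈ A.erase i, logFactorialRoot #((G a).erase j)) := by
        gcongr with i hi j hj
        exact hfiber i hi j hj
    _ = ∑ i ∈ A, (#M * log #(G i) +
          ∑ f ∈ M, ∑ a ∈ A.erase i, logFactorialRoot #((G a).erase (f i))) := by
        refine sum_congr rfl fun i hi ↦ ?_
        rw [sum_card_fiberwise_mul_eq_sum_matchings hi]
    _ = ∑ a ∈ A, (#M * log #(G a) +
          ∑ f ∈ M, ∑ i ∈ A.erase a, logFactorialRoot #((G a).erase (f i))) := by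
        rw [sum_add_distrib, sum_add_distrib, sum_comm, sum_comm (s := A)]
        congr 1
        refine sum_congr rfl fun f _ ↦ sum_comm' fun i a ↦ ?_
        simp only [mem_erase]
        tauto
    _ = ∑ a ∈ A, #M * (#A * logFactorialRoot #(G a)) := by
        refine sum_congr rfl fun a ha ↦ ?_
        have h := sum_congr rfl fun f hf ↦
          log_card_add_sum_logFactorialRoot_card_erase hB hAB hf ha
        rwa [sum_add_distrib, sum_const, sum_const, nsmul_eq_mul, nsmul_eq_mul] at h
    _ = #A * (#M * ∑ a ∈ A, logFactorialRoot #(G a)) := by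
        rw [mul_sum, mul_sum]; ring_nf

theorem log_card_matchings_le (hB : ∀ a ∈ A, G a ⊆ B) (hAB : #B = #A) :
    log #(matchings A G) ≤ ∑ a ∈ A, logFactorialRoot #(G a) := by
  induction A using Finset.strongInduction generalizing B G with
  | H A ih =>
  rcases A.eq_empty_or_nonempty with rfl | hA
  · simpa using log_nonpos (by positivity) (by exact_mod_cast card_matchings_empty_le_one G)
  rcases Nat.eq_zero_or_pos #(matchings A G) with hM | hM
  · rw [hM, Nat.cast_zero, log_zero]
    exact sum_nonneg fun _ _ ↦ logFactorialRoot_nonneg _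
  have hfiber : ∀ i ∈ A, ∀ j ∈ G i, log #{f ∈ matchings A G | f i = j} ≤
      ∑ a ∈ A.erase i, logFactorialRoot #((G a).erase j) := by
    intro i hi j hj
    rw [card_matchings_filter_apply_eq hi hj]
    refine ih _ (erase_ssubset hi) (B := B.erase j)
      (fun a ha ↦ erase_subset_erase j (hB a (mem_of_mem_erase ha))) ?_
    rw [card_erase_of_mem (hB i hi hj), card_erase_of_mem hi, hAB]
  exact le_of_mul_le_mul_left (le_of_mul_le_mul_left
    (card_mul_mul_log_card_matchings_le_of_fiberwise hB hAB hfiber) (by positivity)) (by positivity)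

end Bregman

theorem log_card_perm_le {α : Type*} [Fintype α] [DecidableEq α] (G : α → Finset α) :
    log #{σ : Equiv.Perm α | ∀ a, σ a ∈ G a} ≤ ∑ a, logFactorialRoot #(G a) := by
  have h : #{σ : Equiv.Perm α | ∀ a, σ a ∈ G a} = #(matchings univ G) := by
    refine card_nbij (⇑) (fun σ hσ ↦ ?_) DFunLike.coe_injective.injOn fun f hf ↦ ?_
    · simp only [coe_filter, mem_univ, true_and, Set.mem_ofPred_eq] at hσ
      simp [mem_matchings, hσ, σ.injective.eq_iff]
    · obtain ⟨hG, hinj, -⟩ := mem_matchings.1 hf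
      have hbij : f.Bijective := Finite.injective_iff_bijective.1 fun a b ↦
        hinj a (mem_univ a) b (mem_univ b)
      exact ⟨Equiv.ofBijective f hbij, by simpa using hG, rfl⟩
  rw [h]
  exact log_card_matchings_le (B := univ) (fun _ _ ↦ subset_univ _) rfl
lemma log_factorial_le (n : ℕ) : log n ! ≤ n * log n - n + log n / 2 + 1 := by
  rcases eq_or_ne n 0 with rfl | hn
  · simp
  obtain ⟨k, rfl⟩ := Nat.exists_eq_add_one_of_ne_zero hn
  have h := log_le_log (Stirling.stirlingSeq'_pos k)
    (Stirling.stirlingSeq'_antitone (Nat.zero_le k))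
  simp only [Function.comp_apply, Stirling.log_stirlingSeq_formula] at h
  push_cast at h ⊢
  rw [log_div (by positivity) (by positivity), log_mul (by norm_num) (by positivity), log_exp] at h
  simp only [Nat.factorial_one, Nat.cast_one, log_one, one_mul, one_div, log_inv, log_exp] at h
  linarith

lemma log_factorial_add_mul_log_le (r d : ℕ) : log r ! + d * log r ≤ log (r + d) ! := by
  rcases eq_or_ne r 0 with rfl | hr
  · simp [log_natCast_nonneg]
  have h : ((r ! * r ^ d : ℕ) : ℝ) ≤ (r + d) ! := by
    exact_mod_cast (Nat.mul_le_mul_left _ (Nat.pow_le_pow_left r.le_succ d)).trans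
      Nat.factorial_mul_pow_le_factorial
  rw [Nat.cast_mul, Nat.cast_pow] at h
  have := log_le_log (by positivity) h
  rwa [log_mul (by positivity) (by positivity), log_pow] at this

lemma logFactorialRoot_le {r d : ℕ} (hdr : d ≤ r) :
    logFactorialRoot r ≤ logFactorialRoot (r + d) - d / (r + d : ℕ) +
      2 * d * (1 + log (r + d : ℕ)) / (r + d : ℕ) ^ 2 := by
  rcases eq_or_ne r 0 with rfl | hr
  · obtain rfl : d = 0 := by omega
    simp [logFactorialRoot]
  set M := r + d with hM
  have hr0 : (0 : ℝ) < r := by positivity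
  have hM0 : (0 : ℝ) < M := by positivity
  have hMr : (M : ℝ) ≤ 2 * r := by rw [hM]; push_cast; exact_mod_cast (by omega : r + d ≤ 2 * r)
  have hlogr : log r ≤ log M := log_le_log hr0 (by exact_mod_cast (by omega : r ≤ M))
  have key : M * log r ! - r * log M ! + d * r ≤ d * (1 + log M) := by
    have h1 : log r ! + d * log r ≤ log M ! := log_factorial_add_mul_log_le r d
    have h2 := log_factorial_le r
    have hM' : (M : ℝ) * log r ! = r * log r ! + d * log r ! := by rw [hM]; push_cast; ring
    have hd : (0 : ℝ) ≤ d := d.cast_nonneg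
    nlinarith [mul_le_mul_of_nonneg_left h1 hr0.le, mul_le_mul_of_nonneg_left h2 hd,
      mul_le_mul_of_nonneg_left hlogr hd, mul_nonneg hd (log_natCast_nonneg r)]
  have hdlog : (0 : ℝ) ≤ d * (1 + log M) := by positivity
  rw [logFactorialRoot, logFactorialRoot, ← sub_nonneg]
  have e : log M ! / M - d / M + 2 * d * (1 + log M) / M ^ 2 - log r ! / r =
      (2 * r * (d * (1 + log M)) - M * (M * log r ! - r * log M ! + d * r)) / (r * M ^ 2) := by
    field_simp
    ring
  rw [e]
  refine div_nonneg ?_ (by positivity)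
  nlinarith [mul_le_mul_of_nonneg_left key hM0.le, mul_le_mul_of_nonneg_right hMr hdlog]

section Complement

variable {α : Type*} [Fintype α] [DecidableEq α] (H : Finset (α × α))

lemma card_filter_notMem_eq_card_sub (a : α) :
    #{b | (a, b) ∉ H} = Fintype.card α - #{e ∈ H | e.1 = a} := by
  have h : #{b | (a, b) ∈ H} = #{e ∈ H | e.1 = a} := by
    refine card_nbij' (a, ·) Prod.snd (fun b ↦ by simp) ?_ (fun b _ ↦ rfl) ?_ <;>
      rintro ⟨a', b⟩ h <;> obtain ⟨h, rfl⟩ := mem_filter.1 h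
    · simpa using h
    · rfl
  rw [← h, filter_not, card_sdiff_of_subset (filter_subset _ _), card_univ]

lemma sum_logFactorialRoot_card_filter_notMem_le {D : ℕ} (hm : 2 ≤ Fintype.card α)
    (hD : 2 * D ≤ Fintype.card α) (hrow : ∀ a, #{e ∈ H | e.1 = a} ≤ D) :
    ∑ a, logFactorialRoot #{b | (a, b) ∉ H} ≤
      log (Fintype.card α)! - #H / Fintype.card α +
        5 * D * log (Fintype.card α) / Fintype.card α := by
  set m := Fintype.card α with hm_def
  set d : α → ℕ := fun a ↦ #{e ∈ H | e.1 = a}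
  have hm0 : (0 : ℝ) < m := by positivity
  have hH : (#H : ℝ) = ∑ a, (d a : ℝ) := by exact_mod_cast card_eq_sum_card_fiberwise (by simp)
  have hHD : (#H : ℝ) ≤ m * D := by
    rw [hH]
    simpa [m] using sum_le_sum fun a (_ : a ∈ univ) ↦ (by exact_mod_cast hrow a : (d a : ℝ) ≤ D)
  have hlog : 2 * (1 + log m) ≤ 5 * log m := by
    have := log_le_log (by norm_num) (by exact_mod_cast hm : (2 : ℝ) ≤ m)
    linarith [log_two_gt_d9]
  calc ∑ a, logFactorialRoot #{b | (a, b) ∉ H}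
      ≤ ∑ a, (logFactorialRoot m - d a / m + 2 * d a * (1 + log m) / m ^ 2) := by
        refine sum_le_sum fun a _ ↦ ?_
        have hda : d a ≤ D := hrow a
        have h := logFactorialRoot_le (r := m - d a) (d := d a) (by omega)
        rwa [Nat.sub_add_cancel (by omega), ← card_filter_notMem_eq_card_sub] at h
    _ = log m ! - #H / m + 2 * #H * (1 + log m) / m ^ 2 := by
        simp only [sum_add_distrib, sum_sub_distrib, sum_const, card_univ, ← hm_def, nsmul_eq_mul,
          ← sum_div, ← sum_mul, ← mul_sum, natCast_mul_logFactorialRoot, hH]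
    _ ≤ log m ! - #H / m + 5 * D * log m / m := by
        have h := mul_le_mul hHD hlog (by positivity) (by positivity)
        gcongr log m ! - #H / m + ?_
        rw [div_le_div_iff₀ (by positivity) hm0]
        nlinarith [mul_le_mul_of_nonneg_left h hm0.le]

end Complement

/-- Corollary of Brégman's theorem: there is an absolute constant `C > 0` such that for every
`m ≥ 2` and every spanning subgraph `H` of `K_{m,m}` (encoded as its set of edges, i.e. a set of
pairs `(a, b)` with `a` in the part `A` and `b` in the part `B`) with maximum degree at most
`D ≤ m/2`, the number of perfect matchings of `K_{m,m} ∖ H` (encoded as bijections `σ` from `A`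
to `B` avoiding the edges of `H`) is at most `exp(C·D·log m/m) · m! · exp(−|E(H)|/m)`. -/
theorem bregman_corollary_matchings_upper_bound :
    ∃ C : ℝ, 0 < C ∧ ∀ m : ℕ, 2 ≤ m → ∀ D : ℕ, ∀ H : Finset (Fin m × Fin m),
      (D : ℝ) ≤ (m : ℝ) / 2 →
      (∀ a : Fin m, (H.filter fun e => e.1 = a).card ≤ D) →
      (∀ b : Fin m, (H.filter fun e => e.2 = b).card ≤ D) →
      (Set.ncard {σ : Equiv.Perm (Fin m) | ∀ a, (a, σ a) ∉ H} : ℝ) ≤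
        Real.exp (C * (D : ℝ) * Real.log (m : ℝ) / (m : ℝ)) * (m.factorial : ℝ) *
          Real.exp (-(H.card : ℝ) / (m : ℝ)) := by
  refine ⟨5, by norm_num, fun m hm D H hD hrow _ ↦ ?_⟩
  have h2D : 2 * D ≤ Fintype.card (Fin m) := by
    rw [Fintype.card_fin]
    exact_mod_cast (by linarith : (2 * D : ℝ) ≤ m)
  have hlog := (log_card_perm_le _).trans
    (sum_logFactorialRoot_card_filter_notMem_le H (by simpa using hm) h2D hrow)
  simp only [Fintype.card_fin] at hlog
  refine le_trans (le_of_eq ?_) ((le_exp_log _).trans ((exp_le_exp.2 hlog).trans_eq ?_))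
  · rw [Set.ncard_eq_toFinset_card']
    simp
  rw [sub_eq_add_neg, add_comm, ← add_assoc, exp_add, exp_add, exp_log (by positivity), neg_div]
end

section
/- There exists an absolute constant C > 0 such that the following holds. Let m ≥ 1 and let H be a spanning subgraph of K_{m,m} with |E(H)| < m/4. Then the number of perfect matchings of K_{m,m} ∖ H is at least (1 − C·|E(H)|²/m²) · m! · exp(−|E(H)|/m). In fact, one may take C = 10: the number of perfect matchings of K_{m,m} ∖ H is at least (1 − 10·|E(H)|²/m²) · m! · exp(−|E(H)|/m). -/
/-! A permutation `σ` meets `H` only if `σ a = b` for some `(a, b) ∈ H`, and each such condition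
holds for exactly `(m - 1)!` permutations, so at least `(1 - x) m!` permutations avoid `H`,
where `x = |H| / m`. Since `(1 + x) e^{-x} ≤ 1`, we have
`(1 - 10x²) e^{-x} ≤ (1 - x²) e^{-x} = (1 - x) (1 + x) e^{-x} ≤ 1 - x` whenever `x ≤ 1`. -/

open Finset Equiv
open scoped Nat

namespace Equiv.Perm

variable {α : Type*} [Fintype α] [DecidableEq α]

theorem card_filter_apply_eq_eq (a b c : α) :
    #{σ : Perm α | σ a = b} = #{σ : Perm α | σ a = c} :=
  card_bij' (fun σ _ ↦ swap b c * σ) (fun σ _ ↦ swap b c * σ)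
    (by simp +contextual) (by simp +contextual) (by simp [← mul_assoc]) (by simp [← mul_assoc])

theorem card_filter_apply_eq (a b : α) :
    #{σ : Perm α | σ a = b} = (Fintype.card α - 1)! := by
  have hα : Fintype.card α ≠ 0 := (Fintype.card_pos_iff.2 ⟨a⟩).ne'
  refine Nat.eq_of_mul_eq_mul_left (Nat.pos_of_ne_zero hα) ?_
  calc Fintype.card α * #{σ : Perm α | σ a = b}
      = ∑ c : α, #{σ : Perm α | σ a = c} := by
        rw [sum_congr rfl fun c _ ↦ card_filter_apply_eq_eq a c b, sum_const, Finset.card_univ,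
          smul_eq_mul]
    _ = (Fintype.card α)! := by
        rw [← card_eq_sum_card_fiberwise (fun σ _ ↦ mem_univ (σ a)), Finset.card_univ,
          Fintype.card_perm]
    _ = Fintype.card α * (Fintype.card α - 1)! := (Nat.mul_factorial_pred hα).symm

theorem card_filter_exists_mem_le (H : Finset (α × α)) :
    #{σ : Perm α | ∃ a, (a, σ a) ∈ H} ≤ #H * (Fintype.card α - 1)! :=
  calc #{σ : Perm α | ∃ a, (a, σ a) ∈ H}
      ≤ #(H.biUnion fun e ↦ {σ : Perm α | σ e.1 = e.2}) :=
        card_le_card fun σ ↦ by simp +contextual [Prod.exists]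
    _ ≤ ∑ e ∈ H, #{σ : Perm α | σ e.1 = e.2} := card_biUnion_le
    _ = #H * (Fintype.card α - 1)! := by simp [card_filter_apply_eq]

theorem factorial_le_card_filter_forall_notMem_add (H : Finset (α × α)) :
    (Fintype.card α)! ≤ #{σ : Perm α | ∀ a, (a, σ a) ∉ H} + #H * (Fintype.card α - 1)! := by
  rw [← Fintype.card_perm, ← Finset.card_univ,
    ← card_filter_add_card_filter_not (fun σ : Perm α ↦ ∀ a, (a, σ a) ∉ H)]
  gcongr
  simpa using card_filter_exists_mem_le H

theorem one_sub_div_mul_factorial_le [Nonempty α] (H : Finset (α × α)) :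
    (1 - (#H : ℝ) / Fintype.card α) * (Fintype.card α)! ≤ #{σ : Perm α | ∀ a, (a, σ a) ∉ H} := by
  set n := Fintype.card α
  have hn : n * (n - 1)! = n ! := Nat.mul_factorial_pred Fintype.card_ne_zero
  have h : (n ! : ℝ) ≤ #{σ : Perm α | ∀ a, (a, σ a) ∉ H} + #H * (n - 1)! := by
    exact_mod_cast factorial_le_card_filter_forall_notMem_add H
  have hn' : (n : ℝ) ≠ 0 := Nat.cast_ne_zero.2 Fintype.card_ne_zero
  calc (1 - (#H : ℝ) / n) * n ! = (n ! : ℝ) - #H * (n - 1)! := by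
        rw [← hn]; push_cast; field_simp
    _ ≤ _ := by linarith

end Equiv.Perm

theorem Real.one_sub_sq_mul_exp_neg_le {x : ℝ} (hx : x ≤ 1) :
    (1 - x ^ 2) * Real.exp (-x) ≤ 1 - x := by
  have h : (1 + x) * Real.exp (-x) ≤ 1 :=
    calc (1 + x) * Real.exp (-x) ≤ Real.exp x * Real.exp (-x) := by
          gcongr; linarith [Real.add_one_le_exp x]
      _ = 1 := by rw [← Real.exp_add, add_neg_cancel, Real.exp_zero]
  calc (1 - x ^ 2) * Real.exp (-x) = (1 - x) * ((1 + x) * Real.exp (-x)) := by ring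
    _ ≤ 1 - x := mul_le_of_le_one_right (by linarith) h

theorem lower_bound_perfect_matchings_almost_complete_general (m : ℕ)
    (H : Finset (Fin m × Fin m)) (hH : (H.card : ℝ) < (m : ℝ) / 4) :
    (1 - 10 * (H.card : ℝ) ^ 2 / (m : ℝ) ^ 2) * (m.factorial : ℝ) *
      Real.exp (-(H.card : ℝ) / (m : ℝ)) ≤
    (Set.ncard {σ : Equiv.Perm (Fin m) | ∀ a, (a, σ a) ∉ H} : ℝ) := by
  have hm : (0 : ℝ) < m := by linarith [(H.card.cast_nonneg : (0 : ℝ) ≤ H.card)]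
  have : NeZero m := ⟨by exact_mod_cast hm.ne'⟩
  set x : ℝ := H.card / m with hx_def
  have hx : x ≤ 1 := by rw [div_le_one hm]; linarith
  have hcount := Perm.one_sub_div_mul_factorial_le H
  rw [Fintype.card_fin] at hcount
  calc (1 - 10 * (H.card : ℝ) ^ 2 / (m : ℝ) ^ 2) * (m.factorial : ℝ) * Real.exp (-(H.card : ℝ) / m)
      = (1 - 10 * x ^ 2) * Real.exp (-x) * m ! := by rw [hx_def, neg_div]; ring
    _ ≤ (1 - x ^ 2) * Real.exp (-x) * m ! := by gcongr; nlinarith [sq_nonneg x]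
    _ ≤ (1 - x) * m ! := by gcongr; exact Real.one_sub_sq_mul_exp_neg_le hx
    _ ≤ _ := hcount.trans_eq (by rw [← Set.ncard_coe_finset]; simp)

/-- For every `m ≥ 1` and every spanning subgraph `H` of `K_{m,m}` (encoded as its set of edges,
i.e. a set of pairs `(a, b)` with `a` in the part `A` and `b` in the part `B`) with
`|E(H)| < m/4`, the number of perfect matchings of `K_{m,m} ∖ H` (encoded as bijections `σ`
from `A` to `B` avoiding the edges of `H`) is at least
`(1 − 10·|E(H)|²/m²) · m! · exp(−|E(H)|/m)`; in particular the absolute constant `C = 10`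
works. -/
theorem lower_bound_perfect_matchings_almost_complete (m : ℕ) (hm : 1 ≤ m)
    (H : Finset (Fin m × Fin m)) (hH : (H.card : ℝ) < (m : ℝ) / 4) :
    (1 - 10 * (H.card : ℝ) ^ 2 / (m : ℝ) ^ 2) * (m.factorial : ℝ) *
      Real.exp (-(H.card : ℝ) / (m : ℝ)) ≤
    (Set.ncard {σ : Equiv.Perm (Fin m) | ∀ a, (a, σ a) ∉ H} : ℝ) :=
  lower_bound_perfect_matchings_almost_complete_general m H hH
end

section
/- Let m ≥ 1, let H be a spanning subgraph of K_{m,m} with parts A and B of size m, and let q be the number of vertices of A that are not isolated in H. If q < m, then the number of perfect matchings of K_{m,m} ∖ H is at least m! · (1 − |E(H)|/(m − q)). -/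
/-!
Union bound: each edge `(a, b)` of `H` is used by exactly `(m - 1)!` of the `m!` bijections,
so at most `|E(H)| (m - 1)! = m! |E(H)| / m` bijections meet `H`. Since `m - q ≤ m`, this
is at least as strong as the claimed bound.
-/

open Finset Equiv Nat

section

variable {α : Type*} [Fintype α] [DecidableEq α]

theorem card_perm_apply_eq_congr (a b c : α) :
    #{σ : Perm α | σ a = b} = #{σ : Perm α | σ a = c} :=
  card_equiv (Equiv.mulLeft (swap b c)) fun σ => by simp [swap_apply_eq_iff]

theorem card_perm_apply_eq_mul_card (a b : α) :
    #{σ : Perm α | σ a = b} * Fintype.card α = (Fintype.card α)! := by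
  calc #{σ : Perm α | σ a = b} * Fintype.card α
      = ∑ c : α, #{σ : Perm α | σ a = c} := by
        simp [card_perm_apply_eq_congr a _ b, mul_comm]
    _ = (Fintype.card α)! := by
        rw [← card_eq_sum_card_fiberwise (fun σ _ => mem_univ (σ a)), Finset.card_univ,
          Fintype.card_perm]

theorem card_perm_hitting_mul_card_le (H : Finset (α × α)) :
    #{σ : Perm α | ∃ a, (a, σ a) ∈ H} * Fintype.card α ≤ #H * (Fintype.card α)! := by
  have hcover : ({σ : Perm α | ∃ a, (a, σ a) ∈ H} : Finset _) ⊆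
      H.biUnion fun p => {σ : Perm α | σ p.1 = p.2} := by
    intro σ
    simp only [mem_filter, mem_univ, true_and, mem_biUnion]
    rintro ⟨a, ha⟩
    exact ⟨_, ha, rfl⟩
  calc #{σ : Perm α | ∃ a, (a, σ a) ∈ H} * Fintype.card α
      ≤ (∑ p ∈ H, #{σ : Perm α | σ p.1 = p.2}) * Fintype.card α :=
        Nat.mul_le_mul_right _ ((card_le_card hcover).trans card_biUnion_le)
    _ = #H * (Fintype.card α)! := by
        simp [sum_mul, card_perm_apply_eq_mul_card]

theorem factorial_mul_one_sub_le_ncard_perm_avoiding [Nonempty α] (H : Finset (α × α)) :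
    ((Fintype.card α)! : ℝ) * (1 - #H / Fintype.card α) ≤
      Set.ncard {σ : Perm α | ∀ a, (a, σ a) ∉ H} := by
  rw [← coe_filter_univ, Set.ncard_coe_finset]
  have hpos : (0 : ℝ) < Fintype.card α := by exact_mod_cast Fintype.card_pos
  have hsplit : (#{σ : Perm α | ∀ a, (a, σ a) ∉ H} : ℝ) + #{σ : Perm α | ∃ a, (a, σ a) ∈ H} =
      (Fintype.card α)! := by
    have := card_filter_add_card_filter_not (s := (univ : Finset (Perm α)))
      fun σ => ∀ a, (a, σ a) ∉ H
    simp only [not_forall, not_not, Finset.card_univ, Fintype.card_perm] at this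
    exact_mod_cast this
  have hhit : (#{σ : Perm α | ∃ a, (a, σ a) ∈ H} : ℝ) ≤
      #H * (Fintype.card α)! / Fintype.card α := by
    rw [le_div_iff₀ hpos]
    exact_mod_cast card_perm_hitting_mul_card_le H
  have hrw : ((Fintype.card α)! : ℝ) * (1 - #H / Fintype.card α) =
      (Fintype.card α)! - #H * (Fintype.card α)! / Fintype.card α := by ring
  linarith

end

theorem matchings_lower_bound_via_nonisolated_general (m : ℕ)
    (H : Finset (Fin m × Fin m)) (q : ℕ)
    (hqm : q < m) :
    (m.factorial : ℝ) * (1 - (H.card : ℝ) / ((m : ℝ) - (q : ℝ))) ≤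
      (Set.ncard {σ : Equiv.Perm (Fin m) | ∀ a, (a, σ a) ∉ H} : ℝ) := by
  have : Nonempty (Fin m) := ⟨⟨0, by omega⟩⟩
  have hmq : (0 : ℝ) < m - q := sub_pos.2 (by exact_mod_cast hqm)
  calc (m ! : ℝ) * (1 - #H / (m - q))
      ≤ m ! * (1 - #H / m) := by gcongr; linarith [(q.cast_nonneg : (0 : ℝ) ≤ q)]
    _ ≤ Set.ncard {σ : Perm (Fin m) | ∀ a, (a, σ a) ∉ H} := by
      simpa using factorial_mul_one_sub_le_ncard_perm_avoiding H

/-- Let `H` be a spanning subgraph of `K_{m,m}` (encoded as its set of edges, i.e. a set of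
pairs `(a, b)` with `a` in the part `A` and `b` in the part `B`), and let `q` be the number of
vertices of `A` that are not isolated in `H`. If `q < m`, then the number of perfect matchings
of `K_{m,m} ∖ H` (encoded as bijections `σ` from `A` to `B` avoiding the edges of `H`) is at
least `m! · (1 − |E(H)|/(m − q))`. -/
theorem matchings_lower_bound_via_nonisolated (m : ℕ) (hm : 1 ≤ m)
    (H : Finset (Fin m × Fin m)) (q : ℕ)
    (hq : q = (Finset.univ.filter fun a : Fin m => ∃ b, (a, b) ∈ H).card)
    (hqm : q < m) :
    (m.factorial : ℝ) * (1 - (H.card : ℝ) / ((m : ℝ) - (q : ℝ))) ≤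
      (Set.ncard {σ : Equiv.Perm (Fin m) | ∀ a, (a, σ a) ∉ H} : ℝ) :=
  matchings_lower_bound_via_nonisolated_general m H q hqm
end
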